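/- arXiv:2311.04161 — 6 statements merged into one kernel-verified Lean document; each statement's English description precedes it below -/
import Mathlib

section
/- For all positive real numbers a, k, α, β with βk > α + 1, the integral over the real line of |t|^α · (min(1/4, a^β/|t|^β))^k dt equals (βk / ((α+1)(βk − α − 1))) · 2(4^{1/β} a)^{α+1} / 4^k. -/
open MeasureTheory Real Set

/-! With `c = 4 ^ (1 / β) * a` one has `a ^ β / x ^ β = (c / x) ^ β / 4`, so on `x > 0` the
integrand is `4⁻ᵏ x ^ α min(1, (c / x) ^ β) ^ k`: this is `x ^ α` below the cutoff `c` and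
`c ^ (β k) x ^ (α - β k)` above it, and the two power integrals are `c ^ (α + 1) / (α + 1)` and
`c ^ (α + 1) / (β k - α - 1)`. -/

lemma rpow_one_div_mul_div_rpow {L a x β : ℝ} (hL : 0 ≤ L) (ha : 0 ≤ a) (hx : 0 ≤ x)
    (hβ : β ≠ 0) :
    (L ^ (1 / β) * a / x) ^ β = L * (a ^ β / x ^ β) := by
  rw [div_rpow (by positivity) hx, mul_rpow (by positivity) ha, ← rpow_mul hL,
    one_div_mul_cancel hβ, rpow_one, mul_div_assoc]

lemma integral_Ioi_rpow_mul_min_one_div_rpow_rpow {α β k c : ℝ} (hc : 0 < c) (hα : -1 < α)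
    (hβ : 0 ≤ β) (h : α + 1 < β * k) :
    ∫ x in Ioi 0, x ^ α * min 1 ((c / x) ^ β) ^ k
      = β * k / ((α + 1) * (β * k - α - 1)) * c ^ (α + 1) := by
  set f : ℝ → ℝ := fun x => x ^ α * min 1 ((c / x) ^ β) ^ k
  have hdecay : α - β * k < -1 := by linarith
  have hα₁ : α + 1 ≠ 0 := by linarith
  have hgap : β * k - α - 1 ≠ 0 := by linarith
  have near : EqOn f (fun x => x ^ α) (Ioc 0 c) := by
    rintro x ⟨hx0, hxc⟩
    have : 1 ≤ (c / x) ^ β := one_le_rpow ((one_le_div hx0).2 hxc) hβ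
    simp [f, min_eq_left this]
  have far : EqOn f (fun x => c ^ (β * k) * x ^ (α - β * k)) (Ioi c) := by
    intro x hx
    have hx0 : 0 < x := hc.trans hx
    have : (c / x) ^ β ≤ 1 := rpow_le_one (div_pos hc hx0).le ((div_le_one hx0).2 hx.le) hβ
    change x ^ α * min 1 ((c / x) ^ β) ^ k = c ^ (β * k) * x ^ (α - β * k)
    rw [min_eq_right this, ← rpow_mul (div_pos hc hx0).le, div_rpow hc.le hx0.le, rpow_sub hx0]
    ring
  have hnear : ∫ x in Ioc 0 c, f x = c ^ (α + 1) / (α + 1) := by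
    rw [setIntegral_congr_fun measurableSet_Ioc near, ← intervalIntegral.integral_of_le hc.le,
      integral_rpow (Or.inl hα), zero_rpow hα₁, sub_zero]
  have hfar : ∫ x in Ioi c, f x = c ^ (α + 1) / (β * k - α - 1) := by
    rw [setIntegral_congr_fun measurableSet_Ioi far, integral_const_mul,
      integral_Ioi_rpow_of_lt hdecay hc, mul_div_assoc', mul_neg, ← rpow_add hc]
    have : α - β * k + 1 ≠ 0 := by linarith
    field_simp
    ring_nf
  have hint_near : IntegrableOn f (Ioc 0 c) :=
    (intervalIntegral.intervalIntegrable_rpow' hα).1.congr_fun near.symm measurableSet_Ioc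
  have hint_far : IntegrableOn f (Ioi c) :=
    IntegrableOn.congr_fun ((integrableOn_Ioi_rpow_of_lt hdecay hc).const_mul _) far.symm
      measurableSet_Ioi
  rw [← Ioc_union_Ioi_eq_Ioi hc.le, setIntegral_union Ioc_disjoint_Ioi_same measurableSet_Ioi
    hint_near hint_far, hnear, hfar]
  field_simp
  ring

theorem integral_abs_rpow_min_rpow_general (a k α β : ℝ)
    (ha : 0 < a) (hα : 0 < α) (hβ : 0 < β)
    (h : β * k > α + 1) :
    ∫ t : ℝ, |t| ^ α * (min (1 / 4) (a ^ β / |t| ^ β)) ^ k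
      = β * k / ((α + 1) * (β * k - α - 1)) *
        (2 * ((4 : ℝ) ^ (1 / β) * a) ^ (α + 1) / (4 : ℝ) ^ k) := by
  set c := (4 : ℝ) ^ (1 / β) * a
  have hc : 0 < c := by positivity
  have hscale : ∀ x ∈ Ioi (0 : ℝ), x ^ α * min (1 / 4) (a ^ β / x ^ β) ^ k
      = (1 / 4) ^ k * (x ^ α * min 1 ((c / x) ^ β) ^ k) := fun x (hx : 0 < x) => by
    have hmin : min (1 / 4) (a ^ β / x ^ β) = 1 / 4 * min 1 (4 * (a ^ β / x ^ β)) := by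
      rw [mul_min_of_nonneg _ _ (by norm_num)]; ring_nf
    rw [rpow_one_div_mul_div_rpow (by norm_num) ha.le hx.le hβ.ne', hmin,
      mul_rpow (by norm_num) (le_min zero_le_one (by positivity))]
    ring
  rw [integral_comp_abs (f := fun x => x ^ α * min (1 / 4) (a ^ β / x ^ β) ^ k),
    setIntegral_congr_fun measurableSet_Ioi hscale, integral_const_mul,
    integral_Ioi_rpow_mul_min_one_div_rpow_rpow hc (by linarith) hβ.le h,
    div_rpow zero_le_one (by norm_num), one_rpow]
  ring

theorem integral_abs_rpow_min_rpow (a k α β : ℝ)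
    (ha : 0 < a) (hk : 0 < k) (hα : 0 < α) (hβ : 0 < β)
    (h : β * k > α + 1) :
    ∫ t : ℝ, |t| ^ α * (min (1 / 4) (a ^ β / |t| ^ β)) ^ k
      = β * k / ((α + 1) * (β * k - α - 1)) *
        (2 * ((4 : ℝ) ^ (1 / β) * a) ^ (α + 1) / (4 : ℝ) ^ k) :=
  integral_abs_rpow_min_rpow_general a k α β ha hα hβ h
end

section
/- Let n be a positive integer and a ≥ 0 with na ≤ 1/2. Then the sum over k from 1 to n of binom(n,k) · sqrt((2k)!) · (a/2)^k is at most 2na. -/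
/-!
Since `(2k)! = binom(2k,k) (k!)² ≤ 4^k (k!)²` and `binom(n,k) k! ≤ n^k`, the `k`-th term is at most
`(na)^k`, and the geometric series `∑_{k ≥ 1} (na)^k` is at most `na / (1 - na) ≤ 2na` when
`na ≤ 1/2`.
-/

open Finset Nat

theorem Nat.factorial_two_mul_le_four_pow_mul_sq (k : ℕ) :
    (2 * k)! ≤ 4 ^ k * (k !) ^ 2 := by
  have h := Nat.choose_mul_factorial_mul_factorial (show k ≤ 2 * k by omega)
  rw [show 2 * k - k = k by omega, ← Nat.centralBinom_eq_two_mul_choose] at h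
  rw [← h, sq, ← mul_assoc]
  gcongr
  exact Nat.centralBinom_le_four_pow k

theorem Real.sqrt_factorial_two_mul_le (k : ℕ) :
    √((2 * k)! : ℝ) ≤ 2 ^ k * k ! := by
  rw [Real.sqrt_le_left (by positivity), mul_pow, ← pow_mul, mul_comm k 2, pow_mul]
  exact_mod_cast Nat.factorial_two_mul_le_four_pow_mul_sq k

theorem choose_mul_sqrt_factorial_two_mul_mul_pow_le (n k : ℕ) {a : ℝ} (ha : 0 ≤ a) :
    (n.choose k : ℝ) * √((2 * k)! : ℝ) * (a / 2) ^ k ≤ (n * a) ^ k := by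
  calc (n.choose k : ℝ) * √((2 * k)! : ℝ) * (a / 2) ^ k
      ≤ (n ^ k / k !) * (2 ^ k * k !) * (a / 2) ^ k := by
        gcongr
        · exact Nat.choose_le_pow_div k n
        · exact Real.sqrt_factorial_two_mul_le k
    _ = (n * a) ^ k := by
        rw [div_pow, mul_pow]
        field_simp

theorem sum_Icc_one_pow_le_two_mul {x : ℝ} (hx : 0 ≤ x) (hx' : x ≤ 1 / 2) (n : ℕ) :
    ∑ k ∈ Icc 1 n, x ^ k ≤ 2 * x :=
  calc ∑ k ∈ Icc 1 n, x ^ k = ∑ k ∈ Ico 1 (n + 1), x ^ k := rfl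
    _ ≤ x ^ 1 / (1 - x) := geom_sum_Ico_le_of_lt_one hx (by linarith)
    _ ≤ 2 * x := by
        rw [pow_one, div_le_iff₀ (by linarith)]
        nlinarith

theorem sum_choose_sqrt_factorial_le_general (n : ℕ) (a : ℝ) (ha : 0 ≤ a)
    (hna : (n : ℝ) * a ≤ 1 / 2) :
    ∑ k ∈ Finset.Icc 1 n,
        (n.choose k : ℝ) * Real.sqrt ((2 * k).factorial) * (a / 2) ^ k
      ≤ 2 * n * a :=
  calc ∑ k ∈ Icc 1 n, (n.choose k : ℝ) * √((2 * k)! : ℝ) * (a / 2) ^ k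
      ≤ ∑ k ∈ Icc 1 n, ((n : ℝ) * a) ^ k :=
        sum_le_sum fun k _ ↦ choose_mul_sqrt_factorial_two_mul_mul_pow_le n k ha
    _ ≤ 2 * (n * a) := sum_Icc_one_pow_le_two_mul (by positivity) hna n
    _ = 2 * n * a := by ring

theorem sum_choose_sqrt_factorial_le (n : ℕ) (hn : 0 < n) (a : ℝ) (ha : 0 ≤ a)
    (hna : (n : ℝ) * a ≤ 1 / 2) :
    ∑ k ∈ Finset.Icc 1 n,
        (n.choose k : ℝ) * Real.sqrt ((2 * k).factorial) * (a / 2) ^ k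
      ≤ 2 * n * a :=
  sum_choose_sqrt_factorial_le_general n a ha hna
end

section
/- For x in the interval [0,1] and integer m ≥ 2, the function Ψ(x) = (1/m²) · d²/dx² (x^m (1−x)^m) satisfies −(1/(2m)) · x^{m−2}(1−x)^{m−2} ≤ Ψ(x) ≤ (1 − 1/m) · x^{m−2}(1−x)^{m−2}. -/
/-!
Write `t = y (1 - y)`, so that `y ^ m (1 - y) ^ m = t ^ m` with `t' = 1 - 2y` and `t'' = -2`. Then
`Ψ = (1/m) t ^ (m-2) ((m-1)(1-2x)² - 2t)`, and since `(1-2x)² = 1 - 4t` with `0 ≤ t ≤ 1/4`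
on `[0, 1]`, the bracket is affine and decreasing in `t`: it equals `m - 1` at `t = 0` and `-1/2`
at `t = 1/4`.
-/

lemma hasDerivAt_mul_one_sub (x : ℝ) : HasDerivAt (fun y : ℝ => y * (1 - y)) (1 - 2 * x) x :=
  ((hasDerivAt_id' x).fun_mul ((hasDerivAt_id' x).const_sub 1)).congr_deriv (by ring)

lemma deriv_mul_one_sub_pow (m : ℕ) :
    deriv (fun y : ℝ => (y * (1 - y)) ^ m)
      = fun y : ℝ => m * (y * (1 - y)) ^ (m - 1) * (1 - 2 * y) :=
  funext fun y => ((hasDerivAt_mul_one_sub y).fun_pow m).deriv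

lemma deriv_deriv_mul_one_sub_pow (m : ℕ) (hm : 2 ≤ m) (x : ℝ) :
    deriv (deriv fun y : ℝ => (y * (1 - y)) ^ m) x
      = m * (x * (1 - x)) ^ (m - 2) * ((m - 1) * (1 - 2 * x) ^ 2 - 2 * (x * (1 - x))) := by
  obtain ⟨n, rfl⟩ : ∃ n, m = n + 2 := ⟨m - 2, by omega⟩
  have h :
      HasDerivAt (fun y : ℝ => ((n + 2 : ℕ) : ℝ) * (y * (1 - y)) ^ (n + 2 - 1) * (1 - 2 * y))
      (((n + 2 : ℕ) : ℝ) * ((n + 1 : ℕ) * (x * (1 - x)) ^ n * (1 - 2 * x)) * (1 - 2 * x)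
        + ((n + 2 : ℕ) : ℝ) * (x * (1 - x)) ^ (n + 1) * -(2 * 1)) x :=
    ((((hasDerivAt_mul_one_sub x).fun_pow (n + 1)).const_mul _).fun_mul
      (((hasDerivAt_id x).const_mul 2).const_sub 1))
  rw [deriv_mul_one_sub_pow, h.deriv]
  push_cast
  ring

lemma neg_half_le_mul_one_sub_two_mul_sq_sub {c : ℝ} (hc : -(1 / 2) ≤ c) (x : ℝ) :
    -(1 / 2) ≤ c * (1 - 2 * x) ^ 2 - 2 * (x * (1 - x)) := by
  nlinarith [mul_nonneg (neg_le_iff_add_nonneg.mp hc) (sq_nonneg (1 - 2 * x))]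

lemma mul_one_sub_two_mul_sq_sub_le {c : ℝ} (hc : -(1 / 2) ≤ c) {x : ℝ}
    (hx : x ∈ Set.Icc (0 : ℝ) 1) :
    c * (1 - 2 * x) ^ 2 - 2 * (x * (1 - x)) ≤ c := by
  nlinarith [mul_nonneg (neg_le_iff_add_nonneg.mp hc) (mul_nonneg hx.1 (sub_nonneg.mpr hx.2))]

theorem psi_second_deriv_bound (m : ℕ) (hm : 2 ≤ m) (x : ℝ)
    (hx : x ∈ Set.Icc (0 : ℝ) 1) :
    -(1 / (2 * (m : ℝ))) * x ^ (m - 2) * (1 - x) ^ (m - 2)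
        ≤ (1 / (m : ℝ) ^ 2) * deriv (deriv fun y : ℝ => y ^ m * (1 - y) ^ m) x
      ∧ (1 / (m : ℝ) ^ 2) * deriv (deriv fun y : ℝ => y ^ m * (1 - y) ^ m) x
        ≤ (1 - 1 / (m : ℝ)) * x ^ (m - 2) * (1 - x) ^ (m - 2) := by
  have hc : -(1 / 2 : ℝ) ≤ m - 1 := by
    have : (2 : ℝ) ≤ m := by exact_mod_cast hm
    linarith
  have hP : 0 ≤ 1 / (m : ℝ) * (x * (1 - x)) ^ (m - 2) :=
    mul_nonneg (by positivity) (pow_nonneg (mul_nonneg hx.1 (sub_nonneg.mpr hx.2)) _)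
  have hΨ : (1 / (m : ℝ) ^ 2) * deriv (deriv fun y : ℝ => y ^ m * (1 - y) ^ m) x
      = 1 / (m : ℝ) * (x * (1 - x)) ^ (m - 2)
        * ((m - 1) * (1 - 2 * x) ^ 2 - 2 * (x * (1 - x))) := by
    simp_rw [← mul_pow, deriv_deriv_mul_one_sub_pow m hm]
    field_simp
  rw [hΨ, mul_assoc _ (x ^ _), mul_assoc _ (x ^ _), ← mul_pow]
  constructor
  · calc -(1 / (2 * (m : ℝ))) * (x * (1 - x)) ^ (m - 2)
          = 1 / (m : ℝ) * (x * (1 - x)) ^ (m - 2) * -(1 / 2) := by ring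
      _ ≤ _ := mul_le_mul_of_nonneg_left (neg_half_le_mul_one_sub_two_mul_sq_sub hc x) hP
  · calc _ ≤ 1 / (m : ℝ) * (x * (1 - x)) ^ (m - 2) * (m - 1) :=
          mul_le_mul_of_nonneg_left (mul_one_sub_two_mul_sq_sub_le hc hx) hP
      _ = (1 - 1 / (m : ℝ)) * (x * (1 - x)) ^ (m - 2) := by field_simp
end

section
/- Let p be a symmetric probability density on ℝ (p(u) = p(−u) for all u) with CDF P satisfying P(t)(1−P(t)) ≤ min(4^{−m}, (B/(β t^β))^m) for |t| ≥ 1 and P(t)(1−P(t)) ≤ 4^{−m} for |t| ≤ 1, where B > 0, β ≥ 1 and m is an integer with mβ ≥ 2. Then ∫_{−∞}^{∞} t² P(t)^m (1−P(t))^m p(t) dt ≤ (1 ∨ (4B/β))^{2/β} · 4^{−m}. -/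
open MeasureTheory Real

theorem integral_sq_cdf_pow_density_le
    (p : ℝ → ℝ) (B β : ℝ) (m : ℕ)
    (hB : 0 < B) (hβ : 1 ≤ β) (hmβ : 2 ≤ (m : ℝ) * β)
    (hp_nonneg : ∀ u, 0 ≤ p u) (hp_int : Integrable p)
    (hp_tot : ∫ u, p u = 1)
    (hp_symm : ∀ u : ℝ, p u = p (-u))
    (P : ℝ → ℝ) (hP : ∀ t, P t = ∫ u in Set.Iic t, p u)
    (htail : ∀ t : ℝ, 1 ≤ |t| →
      P t * (1 - P t) ≤ min ((4 : ℝ) ^ m)⁻¹ ((B / (β * |t| ^ β)) ^ (m : ℝ)))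
    (hmid : ∀ t : ℝ, |t| ≤ 1 → P t * (1 - P t) ≤ ((4 : ℝ) ^ m)⁻¹) :
    ∫ t : ℝ, t ^ 2 * (P t) ^ m * (1 - P t) ^ m * p t
      ≤ (max 1 (4 * B / β)) ^ (2 / β) * ((4 : ℝ) ^ m)⁻¹ := by
  have hβ0 : (0:ℝ) < β := lt_of_lt_of_le one_pos hβ
  have hm1 : 1 ≤ m := by
    by_contra h
    push_neg at h
    interval_cases m
    simp at hmβ; linarith
  set K : ℝ := max 1 (4 * B / β) with hK
  have hK1 : (1:ℝ) ≤ K := le_max_left _ _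
  have hK0 : (0:ℝ) < K := lt_of_lt_of_le one_pos hK1
  set C : ℝ := K ^ (2 / β) * ((4 : ℝ) ^ m)⁻¹ with hC
  -- basic properties of P
  have hP01 : ∀ t, 0 ≤ P t ∧ P t ≤ 1 := by
    intro t
    rw [hP t]
    constructor
    · exact setIntegral_nonneg measurableSet_Iic fun u _ => hp_nonneg u
    · rw [← hp_tot]
      exact setIntegral_le_integral hp_int (Filter.Eventually.of_forall hp_nonneg)
  have hPP0 : ∀ t, 0 ≤ P t * (1 - P t) := fun t =>
    mul_nonneg (hP01 t).1 (by linarith [(hP01 t).2])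
  have hPP : ∀ t, P t * (1 - P t) ≤ ((4:ℝ) ^ m)⁻¹ := by
    intro t
    rcases le_or_gt |t| 1 with h | h
    · exact hmid t h
    · exact le_trans (htail t h.le) (min_le_left _ _)
  have h4m : ((4:ℝ)^m)⁻¹ ≤ 4⁻¹ := by
    rw [inv_le_inv₀ (by positivity) (by norm_num)]
    calc (4:ℝ) = 4 ^ 1 := (pow_one 4).symm
    _ ≤ 4 ^ m := pow_le_pow_right₀ (by norm_num) hm1
  -- key pointwise bound
  have key : ∀ t : ℝ, t ^ 2 * (P t) ^ m * (1 - P t) ^ m ≤ C := by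
    intro t
    have hprod : t ^ 2 * (P t) ^ m * (1 - P t) ^ m
        = t ^ 2 * (P t * (1 - P t)) ^ m := by rw [mul_assoc, ← mul_pow]
    rw [hprod]
    set s : ℝ := K ^ (1 / β) with hs
    have hs1 : (1:ℝ) ≤ s := one_le_rpow hK1 (by positivity)
    have hs0 : (0:ℝ) < s := lt_of_lt_of_le one_pos hs1
    rcases le_or_gt |t| s with h | h
    · -- small t
      have ht2 : t ^ 2 ≤ K ^ (2 / β) := by
        have : t ^ 2 = |t| ^ 2 := (sq_abs t).symm
        rw [this]
        calc |t| ^ 2 ≤ s ^ 2 := pow_le_pow_left₀ (abs_nonneg t) h 2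
        _ = K ^ (2 / β) := by
            rw [hs, ← rpow_natCast (K ^ (1/β)) 2, ← rpow_mul hK0.le]
            congr 1
            push_cast
            ring
      have hPm : (P t * (1 - P t)) ^ m ≤ ((4:ℝ) ^ m)⁻¹ := by
        calc (P t * (1 - P t)) ^ m ≤ (4⁻¹ : ℝ) ^ m :=
          pow_le_pow_left₀ (hPP0 t) (le_trans (hPP t) h4m) m
        _ = ((4:ℝ) ^ m)⁻¹ := by rw [inv_pow]
      exact mul_le_mul ht2 hPm (pow_nonneg (hPP0 t) m) (by positivity)
    · -- large t
      have ht1 : 1 ≤ |t| := le_trans hs1 h.le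
      have ht0 : (0:ℝ) < |t| := lt_of_lt_of_le one_pos ht1
      have hPm : (P t * (1 - P t)) ^ m ≤ (B / (β * |t| ^ β)) ^ (m : ℝ) := by
        calc (P t * (1 - P t)) ^ m ≤ (P t * (1 - P t)) ^ 1 :=
          pow_le_pow_of_le_one (hPP0 t) (le_trans (hPP t) (le_trans h4m (by norm_num))) hm1
        _ = P t * (1 - P t) := pow_one _
        _ ≤ _ := le_trans (htail t ht1) (min_le_right _ _)
      have hbase : (0:ℝ) < B / (β * |t| ^ β) := by positivity
      have ht2 : t ^ 2 * (B / (β * |t| ^ β)) ^ (m : ℝ) ≤ C := by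
        have habs2 : t ^ 2 = |t| ^ (2:ℝ) := by
          rw [← sq_abs t, ← rpow_natCast |t| 2]
          norm_num
        have e1 : t ^ 2 * (B / (β * |t| ^ β)) ^ (m : ℝ)
            = (B / β) ^ (m:ℝ) * |t| ^ (2 - β * m) := by
          rw [habs2, div_mul_eq_div_div, div_rpow (by positivity : (0:ℝ) ≤ B/β) (rpow_pos_of_pos ht0 β).le,
            ← rpow_mul (abs_nonneg t), div_eq_mul_inv ((B/β)^(m:ℝ)),
            ← rpow_neg (abs_nonneg t),
            show (2:ℝ) - β * (m:ℝ) = 2 + -(β * (m:ℝ)) by ring, rpow_add ht0]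
          ring
        rw [e1]
        have e2 : |t| ^ (2 - β * m) ≤ s ^ (2 - β * m) :=
          rpow_le_rpow_of_nonpos hs0 h.le (by nlinarith)
        have e3 : s ^ (2 - β * m) = K ^ (2/β) * K ^ (-(m:ℝ)) := by
          rw [hs, ← rpow_mul hK0.le, ← rpow_add hK0]
          congr 1
          field_simp
          ring
        have e4 : (B / β) ^ (m:ℝ) * K ^ (-(m:ℝ)) = (B / (β * K)) ^ (m:ℝ) := by
          rw [rpow_neg hK0.le, ← inv_rpow hK0.le,
            ← mul_rpow (by positivity) (by positivity)]
          congr 1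
          field_simp
        have e5 : (B / (β * K)) ^ (m:ℝ) ≤ ((4:ℝ) ^ m)⁻¹ := by
          have hBK : B / (β * K) ≤ 4⁻¹ := by
            rw [div_le_iff₀ (by positivity)]
            have : 4 * B / β ≤ K := le_max_right _ _
            rw [div_le_iff₀ hβ0] at this
            nlinarith
          calc (B / (β * K)) ^ (m:ℝ) ≤ (4⁻¹ : ℝ) ^ (m:ℝ) :=
            rpow_le_rpow (by positivity) hBK (by positivity)
          _ = ((4:ℝ)^m)⁻¹ := by rw [rpow_natCast, inv_pow]
        calc (B / β) ^ (m:ℝ) * |t| ^ (2 - β * m)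
            ≤ (B / β) ^ (m:ℝ) * s ^ (2 - β * m) :=
              mul_le_mul_of_nonneg_left e2 (by positivity)
        _ = K ^ (2/β) * ((B / (β * K)) ^ (m:ℝ)) := by rw [e3, ← mul_assoc, mul_comm ((B/β)^(m:ℝ)), mul_assoc, e4]
        _ ≤ K ^ (2/β) * ((4:ℝ)^m)⁻¹ := mul_le_mul_of_nonneg_left e5 (by positivity)
      calc t ^ 2 * (P t * (1 - P t)) ^ m ≤ t ^ 2 * (B / (β * |t| ^ β)) ^ (m : ℝ) :=
        mul_le_mul_of_nonneg_left hPm (sq_nonneg t)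
      _ ≤ C := ht2
  -- conclude
  have hCpos : 0 ≤ C := by positivity
  calc ∫ t : ℝ, t ^ 2 * (P t) ^ m * (1 - P t) ^ m * p t
      ≤ ∫ t : ℝ, C * p t := by
        apply integral_mono_of_nonneg
        · exact Filter.Eventually.of_forall fun t => by
            have h0 := (hP01 t).1
            have h1 : 0 ≤ (1 - P t) := by linarith [(hP01 t).2]
            exact mul_nonneg (mul_nonneg (mul_nonneg (sq_nonneg t)
              (pow_nonneg h0 m)) (pow_nonneg h1 m)) (hp_nonneg t)
        · exact hp_int.const_mul C
        · exact Filter.Eventually.of_forall fun t =>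
            mul_le_mul_of_nonneg_right (key t) (hp_nonneg t)
  _ = C := by rw [integral_const_mul, hp_tot, mul_one]
  _ = _ := rfl
end

section
/- Suppose ν₁, …, ν_{2m+1} are i.i.d. real random variables with symmetric density p satisfying p(u) ≤ B/(1 ∨ |u|)^{1+β} for some B > 0 and β ≥ 1, and suppose mβ ≥ 2. Then the second moment of their sample median satisfies E[Med(ν₁,…,ν_{2m+1})²] ≤ (2m+1) · (1 ∨ (4B/β))^{2/β}. -/
open MeasureTheory Set

/-- The density of the median of `2m+1` i.i.d. samples with density `p` and CDF `P`. -/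
noncomputable def medianDensity (p P : ℝ → ℝ) (m : ℕ) (t : ℝ) : ℝ :=
  (2 * m + 1) * (Nat.choose (2 * m) m : ℝ) * (P t) ^ m * (1 - P t) ^ m * p t

/-!
With `q(t) = P(t) (1 - P(t))`, the median density is at most `(2m+1) (4q)^m p(t)`. Symmetry
bounds `q(t)` by the tail mass beyond `|t|`, which the decay of `p` makes at most `B / (β |t|^β)`,
so `4q(t) |t|^β ≤ M := 1 ∨ 4B/β` for every `t`. Since `mβ ≥ 2` and `4q ≤ 1`,
`t² (4q)^m ≤ (4q |t|^β)^{2/β} ≤ M^{2/β}`, and integrating against `p` gives the bound.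
-/

lemma sq_mul_pow_le_rpow {x t β : ℝ} {m : ℕ} (hβ : 0 < β) (hmβ : 2 ≤ m * β)
    (hx0 : 0 ≤ x) (hx1 : x ≤ 1) :
    t ^ 2 * x ^ m ≤ (x * |t| ^ β) ^ (2 / β) := by
  have hexp : 2 / β ≤ m := by rwa [div_le_iff₀ hβ]
  calc t ^ 2 * x ^ m = |t| ^ (2 : ℝ) * x ^ (m : ℝ) := by
        rw [Real.rpow_two, sq_abs, Real.rpow_natCast]
    _ ≤ |t| ^ (2 : ℝ) * x ^ (2 / β) := by
        exact mul_le_mul_of_nonneg_left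
          (Real.rpow_le_rpow_of_exponent_ge' hx0 hx1 (by positivity) hexp) (by positivity)
    _ = (x * |t| ^ β) ^ (2 / β) := by
        rw [Real.mul_rpow hx0 (by positivity), ← Real.rpow_mul (abs_nonneg t),
          mul_div_cancel₀ _ hβ.ne', mul_comm]

lemma choose_middle_mul_pow_le {x : ℝ} (m : ℕ) (hx : 0 ≤ x) :
    (Nat.choose (2 * m) m : ℝ) * x ^ m ≤ (4 * x) ^ m := by
  rw [mul_pow]
  gcongr
  exact_mod_cast (Nat.centralBinom_eq_two_mul_choose m).symm.trans_le
    (Nat.centralBinom_le_four_pow m)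

lemma setIntegral_Ioi_le_of_le_mul_rpow {p : ℝ → ℝ} {B β t : ℝ} (hβ : 0 < β) (ht : 0 < t)
    (hp_int : IntegrableOn p (Ioi t)) (hp : ∀ u ∈ Ioi t, p u ≤ B * u ^ (-(1 + β))) :
    ∫ u in Ioi t, p u ≤ B * t ^ (-β) / β := by
  have hexp : -(1 + β) < -1 := by linarith
  calc ∫ u in Ioi t, p u ≤ ∫ u in Ioi t, B * u ^ (-(1 + β)) :=
        setIntegral_mono_on hp_int ((integrableOn_Ioi_rpow_of_lt hexp ht).const_mul B)
          measurableSet_Ioi hp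
    _ = B * t ^ (-β) / β := by
        rw [integral_const_mul, integral_Ioi_rpow_of_lt hexp ht, show -(1 + β) + 1 = -β by ring]
        field_simp

section SymmetricDensity

variable {p : ℝ → ℝ} (hp_nonneg : ∀ u, 0 ≤ p u) (hp_int : Integrable p)
  (hp_tot : ∫ u, p u = 1)
include hp_nonneg hp_int hp_tot

lemma setIntegral_Iic_le_one (t : ℝ) : ∫ u in Iic t, p u ≤ 1 :=
  hp_tot ▸ setIntegral_le_integral hp_int (.of_forall hp_nonneg)

omit hp_nonneg in
lemma one_sub_setIntegral_Iic (t : ℝ) : 1 - ∫ u in Iic t, p u = ∫ u in Ioi t, p u := by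
  rw [← hp_tot, ← intervalIntegral.integral_Iic_add_Ioi hp_int.integrableOn hp_int.integrableOn,
    add_sub_cancel_left]

lemma setIntegral_Iic_mul_one_sub_le (hp_symm : ∀ u, p u = p (-u)) (t : ℝ) :
    (∫ u in Iic t, p u) * (1 - ∫ u in Iic t, p u) ≤ ∫ u in Ioi |t|, p u := by
  have hP0 : 0 ≤ ∫ u in Iic t, p u := setIntegral_nonneg measurableSet_Iic fun u _ ↦ hp_nonneg u
  have hP1 := setIntegral_Iic_le_one hp_nonneg hp_int hp_tot t
  rcases le_or_gt 0 t with ht | ht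
  · rw [abs_of_nonneg ht, ← one_sub_setIntegral_Iic hp_int hp_tot]
    exact mul_le_of_le_one_left (by linarith) hP1
  · have hP_symm : ∫ u in Iic t, p u = ∫ u in Ioi (-t), p u := by
      rw [← integral_comp_neg_Iic]
      exact setIntegral_congr_fun measurableSet_Iic fun u _ ↦ hp_symm u
    rw [abs_of_neg ht, ← hP_symm]
    exact mul_le_of_le_one_right hP0 (by linarith)

lemma four_mul_setIntegral_Iic_mul_one_sub_mul_rpow_le (hp_symm : ∀ u, p u = p (-u))
    {B β : ℝ} (hβ : 0 < β) (hp_bound : ∀ u, p u ≤ B / (max 1 |u|) ^ (1 + β)) (t : ℝ) :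
    4 * ((∫ u in Iic t, p u) * (1 - ∫ u in Iic t, p u)) * |t| ^ β ≤ max 1 (4 * B / β) := by
  set P := ∫ u in Iic t, p u
  have hq : P * (1 - P) ≤ ∫ u in Ioi |t|, p u :=
    setIntegral_Iic_mul_one_sub_le hp_nonneg hp_int hp_tot hp_symm t
  rcases le_or_gt |t| 1 with ht | ht
  · have h4q : 4 * (P * (1 - P)) ≤ 1 := by nlinarith [sq_nonneg (2 * P - 1)]
    have htβ : |t| ^ β ≤ 1 := Real.rpow_le_one (abs_nonneg t) ht hβ.le
    exact le_max_of_le_left (mul_le_one₀ h4q (by positivity) htβ)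
  · have hdecay : ∀ u ∈ Ioi |t|, p u ≤ B * u ^ (-(1 + β)) := fun u hu ↦ by
      have hu : 1 < u := ht.trans hu
      rw [Real.rpow_neg (by linarith), ← div_eq_mul_inv]
      simpa [abs_of_pos (by linarith : (0 : ℝ) < u), hu.le] using hp_bound u
    have htail := setIntegral_Ioi_le_of_le_mul_rpow hβ (by linarith) hp_int.integrableOn hdecay
    rw [Real.rpow_neg (abs_nonneg t)] at htail
    refine le_max_of_le_right ?_
    calc 4 * (P * (1 - P)) * |t| ^ β ≤ 4 * (B * (|t| ^ β)⁻¹ / β) * |t| ^ β := by gcongr; linarith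
      _ = 4 * B / β := by field_simp

end SymmetricDensity

lemma medianDensity_nonneg {p P : ℝ → ℝ} {t : ℝ} (m : ℕ) (hp : 0 ≤ p t) (hP0 : 0 ≤ P t)
    (hP1 : P t ≤ 1) : 0 ≤ medianDensity p P m t := by
  have : 0 ≤ 1 - P t := by linarith
  unfold medianDensity
  positivity

lemma sq_mul_medianDensity_le {p P : ℝ → ℝ} {β M t : ℝ} {m : ℕ} (hβ : 0 < β)
    (hmβ : 2 ≤ m * β) (hp : 0 ≤ p t) (hP0 : 0 ≤ P t) (hP1 : P t ≤ 1)
    (hM : 4 * (P t * (1 - P t)) * |t| ^ β ≤ M) :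
    t ^ 2 * medianDensity p P m t ≤ (2 * m + 1) * M ^ (2 / β) * p t := by
  have hq0 : 0 ≤ P t * (1 - P t) := mul_nonneg hP0 (by linarith)
  have hq1 : 4 * (P t * (1 - P t)) ≤ 1 := by nlinarith [sq_nonneg (2 * P t - 1)]
  calc t ^ 2 * medianDensity p P m t
      = (2 * m + 1) * (t ^ 2 * ((Nat.choose (2 * m) m : ℝ) * (P t * (1 - P t)) ^ m)) * p t := by
        rw [medianDensity, mul_pow]; ring
    _ ≤ (2 * m + 1) * (t ^ 2 * (4 * (P t * (1 - P t))) ^ m) * p t := by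
        gcongr; exact choose_middle_mul_pow_le m hq0
    _ ≤ (2 * m + 1) * (4 * (P t * (1 - P t)) * |t| ^ β) ^ (2 / β) * p t := by
        gcongr; exact sq_mul_pow_le_rpow hβ hmβ (by positivity) hq1
    _ ≤ (2 * m + 1) * M ^ (2 / β) * p t := by gcongr

theorem median_second_moment_le_general (p : ℝ → ℝ) (B β : ℝ) (m : ℕ)
    (hβ : 1 ≤ β) (hmβ : 2 ≤ (m : ℝ) * β)
    (hp_nonneg : ∀ u, 0 ≤ p u) (hp_int : Integrable p)
    (hp_tot : ∫ u, p u = 1)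
    (hp_symm : ∀ u : ℝ, p u = p (-u))
    (hp_bound : ∀ u : ℝ, p u ≤ B / (max 1 |u|) ^ (1 + β))
    (P : ℝ → ℝ) (hP : ∀ t, P t = ∫ u in Set.Iic t, p u) :
    ∫ t : ℝ, t ^ 2 * medianDensity p P m t
      ≤ (2 * m + 1) * (max 1 (4 * B / β)) ^ (2 / β) := by
  have hβ0 : 0 < β := by linarith
  have hP0 t : 0 ≤ P t := hP t ▸ setIntegral_nonneg measurableSet_Iic fun u _ ↦ hp_nonneg u
  have hP1 t : P t ≤ 1 := hP t ▸ setIntegral_Iic_le_one hp_nonneg hp_int hp_tot t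
  have hPtail t : 4 * (P t * (1 - P t)) * |t| ^ β ≤ max 1 (4 * B / β) := hP t ▸
    four_mul_setIntegral_Iic_mul_one_sub_mul_rpow_le hp_nonneg hp_int hp_tot hp_symm hβ0 hp_bound t
  calc ∫ t, t ^ 2 * medianDensity p P m t
      ≤ ∫ t, (2 * m + 1) * (max 1 (4 * B / β)) ^ (2 / β) * p t :=
        integral_mono_of_nonneg
          (.of_forall fun t ↦ mul_nonneg (sq_nonneg t)
            (medianDensity_nonneg m (hp_nonneg t) (hP0 t) (hP1 t)))
          (hp_int.const_mul _)
          (.of_forall fun t ↦ sq_mul_medianDensity_le hβ0 hmβ (hp_nonneg t) (hP0 t) (hP1 t)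
            (hPtail t))
    _ = (2 * m + 1) * (max 1 (4 * B / β)) ^ (2 / β) := by
        rw [integral_const_mul, hp_tot, mul_one]

theorem median_second_moment_le (p : ℝ → ℝ) (B β : ℝ) (m : ℕ)
    (hB : 0 < B) (hβ : 1 ≤ β) (hmβ : 2 ≤ (m : ℝ) * β)
    (hp_nonneg : ∀ u, 0 ≤ p u) (hp_int : Integrable p)
    (hp_tot : ∫ u, p u = 1)
    (hp_symm : ∀ u : ℝ, p u = p (-u))
    (hp_bound : ∀ u : ℝ, p u ≤ B / (max 1 |u|) ^ (1 + β))
    (P : ℝ → ℝ) (hP : ∀ t, P t = ∫ u in Set.Iic t, p u) :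
    ∫ t : ℝ, t ^ 2 * medianDensity p P m t
      ≤ (2 * m + 1) * (max 1 (4 * B / β)) ^ (2 / β) :=
  median_second_moment_le_general p B β m hβ hmβ hp_nonneg hp_int hp_tot hp_symm hp_bound P hP
end

section
/- Fix θ > 0 and positive integers n > k, and let s be a probability density on ℝ satisfying s^{*(n−k)}(u) ≤ B(n−k) / ((n−k)^{(β+1)/β} + |u|^{1+β}) for constants B > 0 and β ≥ 1. Then for every w > 0, ∫_{−∞}^{∞} exp(−(w − y/n)²/(4θ²)) s^{*(n−k)}(y) dy ≤ min(1, 2^{2+β} B θ √π / (n^{β−1} w^{1+β}) + exp(−w²/(16θ²))). -/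
open MeasureTheory Real
open scoped Convolution

/-!
Split the line at `y = n w / 2`. To the left, `|w - y / n| ≥ w / 2`, so the Gaussian factor is at
most `exp (-w² / (16 θ²))` while `s^{*(n-k)}` has mass one. To the right, the density is at most
`B (n - k) / (n w / 2)^{1+β}` while the Gaussian factor has total mass `2 θ n √π`; with `n - k ≤ n`
this is the polynomial term. The bound by `1` holds because the Gaussian factor is at most `1`.
-/

/-- `convIter s k` is the `(k+1)`-fold self-convolution of `s`:
    `convIter s 0 = s` and `convIter s (j-1) = s^{*j}`. -/
noncomputable def convIter (s : ℝ → ℝ) : ℕ → ℝ → ℝ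
  | 0 => s
  | k + 1 => fun x => ∫ y : ℝ, s y * convIter s k (x - y)

section convIter

variable {s : ℝ → ℝ}

lemma convIter_succ (m : ℕ) :
    convIter s (m + 1) = s ⋆[ContinuousLinearMap.mul ℝ ℝ] convIter s m := by
  ext x
  simp [convIter, convolution, ContinuousLinearMap.mul_apply']

lemma convIter_nonneg (hs : ∀ x, 0 ≤ s x) : ∀ m x, 0 ≤ convIter s m x
  | 0, x => hs x
  | m + 1, _ => integral_nonneg fun _ => mul_nonneg (hs _) (convIter_nonneg hs m _)

lemma integrable_convIter (hs : Integrable s) : ∀ m, Integrable (convIter s m)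
  | 0 => hs
  | m + 1 => by
    rw [convIter_succ]
    exact hs.integrable_convolution _ (integrable_convIter hs m)

lemma integral_convIter (hs : Integrable s) (hs_tot : ∫ x, s x = 1) :
    ∀ m, ∫ x, convIter s m x = 1
  | 0 => hs_tot
  | m + 1 => by
    rw [convIter_succ, integral_convolution _ hs (integrable_convIter hs m)]
    simp [hs_tot, integral_convIter hs hs_tot m]

end convIter

section Gaussian

variable {c : ℝ}

lemma exp_neg_sq_sub_div_eq (w t : ℝ) :
    exp (-(w - t) ^ 2 / c) = exp (-c⁻¹ * (t - w) ^ 2) := by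
  ring_nf

lemma integrable_exp_neg_sq_sub_div (hc : 0 < c) (w n : ℝ) (hn : n ≠ 0) :
    Integrable fun y => exp (-(w - y / n) ^ 2 / c) := by
  simp_rw [exp_neg_sq_sub_div_eq w]
  exact ((integrable_exp_neg_mul_sq (inv_pos.2 hc)).comp_sub_right w).comp_div hn

lemma integral_exp_neg_sq_sub_div (w n : ℝ) :
    ∫ y, exp (-(w - y / n) ^ 2 / c) = |n| * √(π * c) := by
  rw [Measure.integral_comp_div (fun t => exp (-(w - t) ^ 2 / c)) n, smul_eq_mul]
  simp_rw [exp_neg_sq_sub_div_eq w]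
  rw [integral_sub_right_eq_self (fun t => exp (-c⁻¹ * t ^ 2)) w, integral_gaussian,
    div_inv_eq_mul]

lemma exp_neg_sq_sub_div_le (hc : 0 ≤ c) {w t : ℝ} (hw : 0 ≤ w) (ht : t ≤ w / 2) :
    exp (-(w - t) ^ 2 / c) ≤ exp (-w ^ 2 / (4 * c)) := by
  have hsq : w ^ 2 / 4 ≤ (w - t) ^ 2 := by nlinarith
  rw [exp_le_exp, neg_div, neg_div, neg_le_neg_iff, ← div_div]
  exact div_le_div_of_nonneg_right hsq hc

end Gaussian

section WeightedIntegral

variable {α : Type*} [MeasurableSpace α] {μ : Measure α} {f g : α → ℝ}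

lemma integral_mul_le_integral_of_le_one (hf : ∀ x, 0 ≤ f x) (hf_le : ∀ x, f x ≤ 1)
    (hg : ∀ x, 0 ≤ g x) (hg_int : Integrable g μ) :
    ∫ x, f x * g x ∂μ ≤ ∫ x, g x ∂μ :=
  integral_mono_of_nonneg (.of_forall fun x => mul_nonneg (hf x) (hg x)) hg_int
    (.of_forall fun x => mul_le_of_le_one_left (hg x) (hf_le x))

lemma integral_mul_le_of_le_or_le {ε C : ℝ} (hf : ∀ x, 0 ≤ f x) (hg : ∀ x, 0 ≤ g x)
    (hf_int : Integrable f μ) (hg_int : Integrable g μ) (hε : 0 ≤ ε) (hC : 0 ≤ C)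
    (h : ∀ x, f x ≤ ε ∨ g x ≤ C) :
    ∫ x, f x * g x ∂μ ≤ ε * ∫ x, g x ∂μ + C * ∫ x, f x ∂μ := by
  rw [← integral_const_mul, ← integral_const_mul,
    ← integral_add (hg_int.const_mul ε) (hf_int.const_mul C)]
  refine integral_mono_of_nonneg (.of_forall fun x => mul_nonneg (hf x) (hg x))
    ((hg_int.const_mul ε).add (hf_int.const_mul C)) (.of_forall fun x => ?_)
  rcases h x with hfx | hgx
  · nlinarith [mul_le_mul_of_nonneg_right hfx (hg x), mul_nonneg hC (hf x)]
  · nlinarith [mul_le_mul_of_nonneg_left hgx (hf x), mul_nonneg hε (hg x)]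

end WeightedIntegral

lemma div_add_abs_rpow_le_div_rpow {M c p a y : ℝ} (hM : 0 ≤ M) (hc : 0 ≤ c) (hp : 0 ≤ p)
    (ha : 0 < a) (hay : a ≤ y) : M / (c + |y| ^ p) ≤ M / a ^ p := by
  refine div_le_div_of_nonneg_left hM (rpow_pos_of_pos ha p) ?_
  have := rpow_le_rpow ha.le (hay.trans (le_abs_self y)) hp
  linarith

lemma gaussian_le_or_le_of_le_div_add_abs_rpow {g : ℝ → ℝ} {M c p θ n w : ℝ}
    (hbound : ∀ u, g u ≤ M / (c + |u| ^ p)) (hM : 0 ≤ M) (hc : 0 ≤ c) (hp : 0 ≤ p)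
    (hn : 0 < n) (hw : 0 < w) (y : ℝ) :
    exp (-(w - y / n) ^ 2 / (4 * θ ^ 2)) ≤ exp (-w ^ 2 / (16 * θ ^ 2))
      ∨ g y ≤ M / (n * w / 2) ^ p := by
  rcases le_or_gt (y / n) (w / 2) with hy | hy
  · left
    rw [show 16 * θ ^ 2 = 4 * (4 * θ ^ 2) by ring]
    exact exp_neg_sq_sub_div_le (by positivity) hw.le hy
  · right
    rw [lt_div_iff₀ hn] at hy
    exact (hbound y).trans (div_add_abs_rpow_le_div_rpow hM hc hp (by positivity) (by linarith))

lemma polynomial_tail_mul_gaussian_mass_le {B θ β n k w : ℝ} (hB : 0 ≤ B) (hθ : 0 ≤ θ)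
    (hk : 0 ≤ k) (hn : 0 < n) (hw : 0 < w) :
    B * (n - k) / (n * w / 2) ^ (1 + β) * (|n| * √(π * (4 * θ ^ 2)))
      ≤ 2 ^ (2 + β) * B * θ * √π / (n ^ (β - 1) * w ^ (1 + β)) := by
  have hsqrt : √(π * (4 * θ ^ 2)) = 2 * θ * √π := by
    rw [mul_comm, sqrt_mul (by positivity), show (4 : ℝ) * θ ^ 2 = (2 * θ) ^ 2 by ring,
      sqrt_sq (by positivity)]
  have htwo : (2 : ℝ) ^ (2 + β) = 2 * 2 ^ (1 + β) := by
    rw [show (2 : ℝ) + β = 1 + (1 + β) by ring, rpow_add two_pos, rpow_one]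
  have hpow : n ^ (1 + β) = n ^ (β - 1) * n ^ 2 := by
    rw [show (1 : ℝ) + β = (β - 1) + 2 by ring, rpow_add hn, rpow_two]
  have hden : (n * w / 2) ^ (1 + β) * 2 ^ (2 + β) = 2 * n ^ 2 * (n ^ (β - 1) * w ^ (1 + β)) := by
    rw [div_rpow (by positivity) zero_le_two, mul_rpow hn.le hw.le, htwo, hpow]
    field_simp
  rw [abs_of_pos hn, hsqrt, div_mul_eq_mul_div, div_le_div_iff₀ (by positivity) (by positivity),
    show 2 ^ (2 + β) * B * θ * √π * (n * w / 2) ^ (1 + β)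
      = n * (B * (n * (2 * θ * √π)) * (n ^ (β - 1) * w ^ (1 + β))) by
      linear_combination (B * θ * √π) * hden]
  have : 0 ≤ B * (n * (2 * θ * √π)) * (n ^ (β - 1) * w ^ (1 + β)) := by positivity
  nlinarith

theorem gaussian_convolution_bound
    (θ B β : ℝ) (n k : ℕ)
    (hθ : 0 < θ) (hB : 0 < B) (hβ : 1 ≤ β) (hkn : k < n)
    (s : ℝ → ℝ)
    (hs_nonneg : ∀ x, 0 ≤ s x) (hs_int : Integrable s)
    (hs_tot : ∫ x, s x = 1)
    (hs_bound : ∀ u : ℝ,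
      convIter s (n - k - 1) u
        ≤ B * (n - k : ℝ) / (((n : ℝ) - k) ^ ((β + 1) / β) + |u| ^ (1 + β))) :
    ∀ w : ℝ, 0 < w →
      ∫ y : ℝ, Real.exp (-(w - y / n) ^ 2 / (4 * θ ^ 2)) * convIter s (n - k - 1) y
        ≤ min 1
            ((2 : ℝ) ^ (2 + β) * B * θ * Real.sqrt Real.pi /
                ((n : ℝ) ^ (β - 1) * w ^ (1 + β))
              + Real.exp (-w ^ 2 / (16 * θ ^ 2))) := by
  intro w hw
  have hn : (0 : ℝ) < n := by exact_mod_cast (Nat.zero_le k).trans_lt hkn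
  have hnk : (0 : ℝ) < n - k := sub_pos.2 (by exact_mod_cast hkn)
  have hg_nonneg := convIter_nonneg hs_nonneg (n - k - 1)
  have hg_int := integrable_convIter hs_int (n - k - 1)
  have hE_nonneg : ∀ y : ℝ, 0 ≤ exp (-(w - y / n) ^ 2 / (4 * θ ^ 2)) := fun _ => (exp_pos _).le
  refine le_min ?_ ?_
  · rw [← integral_convIter hs_int hs_tot (n - k - 1)]
    exact integral_mul_le_integral_of_le_one hE_nonneg
      (fun y => exp_le_one_iff.2 (div_nonpos_of_nonpos_of_nonneg (by nlinarith) (by positivity)))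
      hg_nonneg hg_int
  calc _ ≤ exp (-w ^ 2 / (16 * θ ^ 2)) * (∫ y, convIter s (n - k - 1) y)
        + B * (n - k) / (n * w / 2) ^ (1 + β) * ∫ y, exp (-(w - y / n) ^ 2 / (4 * θ ^ 2)) :=
        integral_mul_le_of_le_or_le hE_nonneg hg_nonneg
          (integrable_exp_neg_sq_sub_div (by positivity) w n hn.ne') hg_int (exp_pos _).le
          (by positivity)
          (gaussian_le_or_le_of_le_div_add_abs_rpow hs_bound (by positivity) (rpow_nonneg hnk.le _)
            (by linarith) hn hw)
    _ = B * (n - k) / (n * w / 2) ^ (1 + β) * (|(n : ℝ)| * √(π * (4 * θ ^ 2)))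
        + exp (-w ^ 2 / (16 * θ ^ 2)) := by
        rw [integral_convIter hs_int hs_tot, integral_exp_neg_sq_sub_div]
        ring
    _ ≤ _ := by
        gcongr
        exact polynomial_tail_mul_gaussian_mass_le hB.le hθ.le (Nat.cast_nonneg k) hn hw
end
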